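/- Let ψ : ℝ → (0,∞) be the inverse of y ↦ y - 1 + log y, let μ be a probability measure, and let G be a Banach space of measurable functions continuously embedded in L^1(μ). Define M as the set of finite measures P mutually absolutely continuous with μ whose density p = dP/dμ satisfies p - 1 + log p ∈ G. Then the map φ(P) = p - 1 + log p is a bijection from M onto G, with inverse a ↦ ψ(a(·)) dμ. -/

import Mathlib

open Real MeasureTheory Set

/-! `y ↦ y - 1 + log y` is strictly increasing on `(0, ∞)`, so its inverse `ψ` is strictly
increasing (hence measurable) and grows at most linearly, `ψ z ≤ 1 + |z|`. Thus `ψ ∘ a` is an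
integrable, strictly positive density for every integrable `a`. A density is determined `μ`-a.e.
by its measure, so injectivity of `ψ` gives injectivity of `a ↦ ψ(a) dμ`, and
`ψ (p - 1 + log p) = p` shows that every `P ∈ M` is reached. -/

lemma strictMonoOn_sub_one_add_log : StrictMonoOn (fun y : ℝ => y - 1 + log y) (Ioi 0) :=
  fun _ hx _ _ hxy => by
    linarith [log_lt_log hx hxy]

lemma strictMono_of_sub_one_add_log_rightInverse {ψ : ℝ → ℝ} (hψpos : ∀ z, 0 < ψ z)
    (hψinv : ∀ z, ψ z - 1 + log (ψ z) = z) : StrictMono ψ := fun z w hzw =>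
  (strictMonoOn_sub_one_add_log.lt_iff_lt (hψpos z) (hψpos w)).mp <| by
    simpa only [hψinv] using hzw

lemma apply_sub_one_add_log_of_rightInverse {ψ : ℝ → ℝ} (hψpos : ∀ z, 0 < ψ z)
    (hψinv : ∀ z, ψ z - 1 + log (ψ z) = z) {y : ℝ} (hy : 0 < y) : ψ (y - 1 + log y) = y :=
  strictMonoOn_sub_one_add_log.injOn (hψpos _) hy (hψinv _)

lemma le_one_add_abs_of_sub_one_add_log_rightInverse {ψ : ℝ → ℝ}
    (hψinv : ∀ z, ψ z - 1 + log (ψ z) = z) (z : ℝ) : ψ z ≤ 1 + |z| := by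
  rcases le_or_gt (ψ z) 1 with h | h
  · linarith [abs_nonneg z]
  · linarith [hψinv z, log_nonneg h.le, le_abs_self z]

section WithDensity

variable {X : Type*} [MeasurableSpace X] {μ : Measure X}

lemma MeasureTheory.Integrable.comp_of_abs_le_const_add_abs [IsFiniteMeasure μ] {a : X → ℝ}
    {ψ : ℝ → ℝ} (ha : Integrable a μ) (hψ : Measurable ψ) {c : ℝ}
    (hbound : ∀ z, |ψ z| ≤ c + |z|) :
    Integrable (fun x => ψ (a x)) μ :=
  ((integrable_const c).add ha.abs).mono'
    (hψ.comp_aemeasurable ha.aemeasurable).aestronglyMeasurable (.of_forall fun x => hbound (a x))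

lemma absolutelyContinuous_withDensity_ofReal {g : X → ℝ} (hg : AEMeasurable g μ)
    (hpos : ∀ᵐ x ∂μ, 0 < g x) : μ ≪ μ.withDensity (fun x => ENNReal.ofReal (g x)) :=
  withDensity_absolutelyContinuous' hg.ennreal_ofReal <|
    hpos.mono fun _ hx => (ENNReal.ofReal_pos.mpr hx).ne'

lemma ae_eq_of_withDensity_ofReal_eq [SigmaFinite μ] {f g : X → ℝ} (hf : AEMeasurable f μ)
    (hg : AEMeasurable g μ) (hf0 : ∀ᵐ x ∂μ, 0 ≤ f x) (hg0 : ∀ᵐ x ∂μ, 0 ≤ g x)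
    (h : μ.withDensity (fun x => ENNReal.ofReal (f x))
      = μ.withDensity (fun x => ENNReal.ofReal (g x))) : f =ᵐ[μ] g := by
  have hfg := (withDensity_eq_iff_of_sigmaFinite hf.ennreal_ofReal hg.ennreal_ofReal).mp h
  filter_upwards [hfg, hf0, hg0] with x hx hfx hgx
  exact (ENNReal.ofReal_eq_ofReal_iff hfx hgx).mp hx

end WithDensity

/-- Let `ψ` be the inverse of `y ↦ y - 1 + log y`, `μ` a probability measure, and `G` a
space of (equivalence classes of) integrable functions.  Let `M` be the set of finite
measures `P` mutually absolutely continuous with `μ` whose density `p` satisfies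
`p - 1 + log p ∈ G`.  Then `φ(P) = p - 1 + log p` is a bijection from `M` onto `G`,
with inverse `a ↦ ψ(a(·)) dμ`:  every `a ∈ G` yields a member of `M`, every `P ∈ M`
arises this way, and the correspondence is injective modulo `μ`-null sets. -/
theorem balanced_chart_bijection {X : Type*} [MeasurableSpace X]
    (μ : Measure X) [IsProbabilityMeasure μ]
    (ψ : ℝ → ℝ) (hψpos : ∀ z, 0 < ψ z)
    (hψinv : ∀ z, ψ z - 1 + Real.log (ψ z) = z)
    (G : Set (X → ℝ)) (hG : ∀ a ∈ G, Integrable a μ) :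
    let M : Set (Measure X) := {P | IsFiniteMeasure P ∧ P ≪ μ ∧ μ ≪ P ∧
      ∃ p : X → ℝ, (∀ x, 0 < p x) ∧
        P = μ.withDensity (fun x => ENNReal.ofReal (p x)) ∧
        (fun x => p x - 1 + Real.log (p x)) ∈ G}
    (∀ a ∈ G, μ.withDensity (fun x => ENNReal.ofReal (ψ (a x))) ∈ M) ∧
    (∀ P ∈ M, ∃ a ∈ G, P = μ.withDensity (fun x => ENNReal.ofReal (ψ (a x)))) ∧
    (∀ a ∈ G, ∀ b ∈ G,
      μ.withDensity (fun x => ENNReal.ofReal (ψ (a x)))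
        = μ.withDensity (fun x => ENNReal.ofReal (ψ (b x))) → a =ᵐ[μ] b) := by
  intro M
  have hψ : StrictMono ψ := strictMono_of_sub_one_add_log_rightInverse hψpos hψinv
  have hψG : ∀ a ∈ G, Integrable (fun x => ψ (a x)) μ := fun a ha =>
    (hG a ha).comp_of_abs_le_const_add_abs hψ.monotone.measurable fun z => by
      simpa only [abs_of_pos (hψpos z)] using
        le_one_add_abs_of_sub_one_add_log_rightInverse hψinv z
  refine ⟨fun a ha => ?_, ?_, fun a ha b hb h => ?_⟩
  · refine ⟨isFiniteMeasure_withDensity_ofReal (hψG a ha).2,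
      withDensity_absolutelyContinuous _ _,
      absolutelyContinuous_withDensity_ofReal (hψG a ha).aemeasurable
        (.of_forall fun _ => hψpos _),
      fun x => ψ (a x), fun _ => hψpos _, rfl, ?_⟩
    simpa only [hψinv] using ha
  · rintro P ⟨-, -, -, p, hp, rfl, hpG⟩
    refine ⟨_, hpG, ?_⟩
    simp only [apply_sub_one_add_log_of_rightInverse hψpos hψinv (hp _)]
  · exact (ae_eq_of_withDensity_ofReal_eq (hψG a ha).aemeasurable (hψG b hb).aemeasurable
      (.of_forall fun _ => (hψpos _).le) (.of_forall fun _ => (hψpos _).le) h).mono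
      fun _ hx => hψ.injective hx
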